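/- Let k be a natural number, let p₁,…,p_k be distinct primes and n = p₁⋯p_k. Then the Wiener index of the k-dprime divisor function graph Γ_k equals 2^{2k} − 3^k. -/

import Mathlib

/-!
Distinct divisors `u`, `v` of `n` are at distance `1` when one divides the other and at distance
`2` otherwise, through the common neighbour `1`. Hence `dist u v + [u ∣ v] + [v ∣ u] = 2` for every
ordered pair, and summing over all ordered pairs gives `W = τ(n)² - ∑_{d ∣ n} τ(d)`. For `n` a
product of `k` distinct primes, `τ = σ₀` and `d ↦ ∑_{e ∣ d} τ(e) = (ζ * σ₀)(d)` are multiplicative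
with values `2` and `3` at primes, so `W = 4^k - 3^k`.
-/

/-- The `k`-dprime divisor function graph on the positive divisors of `n`:
two distinct divisors `u`, `v` are adjacent iff `u ∣ v` or `v ∣ u`. -/
def divisorGraph (n : ℕ) : SimpleGraph {d : ℕ // d ∈ n.divisors} where
  Adj u v := u ≠ v ∧ ((u : ℕ) ∣ (v : ℕ) ∨ (v : ℕ) ∣ (u : ℕ))
  symm := ⟨fun _ _ ⟨h, hd⟩ => ⟨h.symm, hd.symm⟩⟩
  loopless := ⟨fun _ ⟨h, _⟩ => h rfl⟩

instance (n : ℕ) : DecidableRel (divisorGraph n).Adj :=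
  fun u v => show Decidable (u ≠ v ∧ ((u : ℕ) ∣ (v : ℕ) ∨ (v : ℕ) ∣ (u : ℕ))) from instDecidableAnd

open Finset ArithmeticFunction
open scoped ArithmeticFunction.sigma ArithmeticFunction.zeta

theorem Finset.two_nsmul_sum_sym2 {α M : Type*} [DecidableEq α] [AddCommMonoid M]
    (s : Finset α) (f : Sym2 α → M) :
    2 • ∑ e ∈ s.sym2, f e = ∑ x ∈ s ×ˢ s, f s(x.1, x.2) + ∑ a ∈ s, f s(a, a) := by
  induction s using Finset.induction_on with
  | empty => simp
  | @insert a s ha ih =>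
    have hdisj : Disjoint ((insert a s).image fun b => s(a, b)) s.sym2 := by
      simp only [disjoint_left, mem_image, mem_sym2_iff]
      rintro _ ⟨b, -, rfl⟩ h
      exact ha (h a (Sym2.mem_mk_left a b))
    rw [sum_product] at ih ⊢
    rw [sym2_insert, sum_union hdisj, sum_image fun _ _ _ _ => Sym2.congr_right.mp]
    simp only [sum_insert ha, sum_add_distrib, Sym2.eq_swap (a := a)]
    rw [smul_add, ih]
    abel

namespace SimpleGraph

variable {V : Type*} (G : SimpleGraph V)

noncomputable def wienerIndex [Fintype V] : ℕ :=
  ∑ e ∈ (univ : Finset V).sym2, Sym2.lift ⟨fun u v => G.dist u v, fun _ _ => dist_comm⟩ e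

theorem two_mul_wienerIndex [Fintype V] [DecidableEq V] :
    2 * G.wienerIndex = ∑ x : V × V, G.dist x.1 x.2 := by
  rw [wienerIndex, ← smul_eq_mul, two_nsmul_sum_sym2]
  simp

end SimpleGraph

namespace ArithmeticFunction

theorem sigma_zero_apply_prime {p : ℕ} (hp : p.Prime) : σ 0 p = 2 := by
  simpa using sigma_zero_apply_prime_pow (i := 1) hp

end ArithmeticFunction

namespace Nat

theorem card_divisors_prod_primes {s : Finset ℕ} (hs : ∀ p ∈ s, p.Prime) :
    #(∏ p ∈ s, p).divisors = 2 ^ #s := by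
  rw [← sigma_zero_apply, isMultiplicative_sigma.map_prod_of_prime s hs,
    prod_congr rfl fun p hp => sigma_zero_apply_prime (hs p hp), prod_const]

theorem sum_card_divisors_prod_primes {s : Finset ℕ} (hs : ∀ p ∈ s, p.Prime) :
    ∑ d ∈ (∏ p ∈ s, p).divisors, #d.divisors = 3 ^ #s := by
  have h3 : ∀ p ∈ s, (ζ * σ 0) p = 3 := fun p hp => by
    rw [zeta_mul_apply, (hs p hp).sum_divisors, sigma_zero_apply_prime (hs p hp), sigma_zero_apply]
    rfl
  simp_rw [← sigma_zero_apply]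
  rw [← zeta_mul_apply, (isMultiplicative_zeta.mul isMultiplicative_sigma).map_prod_of_prime s hs,
    prod_congr rfl h3, prod_const]

end Nat

namespace divisorGraph

variable {n : ℕ}

theorem dist_eq_two (hn : n ≠ 0) {u v : {d : ℕ // d ∈ n.divisors}}
    (huv : ¬(u : ℕ) ∣ v) (hvu : ¬(v : ℕ) ∣ u) : (divisorGraph n).dist u v = 2 := by
  have hne : u ≠ v := by rintro rfl; exact huv dvd_rfl
  let one : {d : ℕ // d ∈ n.divisors} := ⟨1, Nat.one_mem_divisors.mpr hn⟩
  have hu : (divisorGraph n).Adj u one := ⟨by rintro rfl; exact huv (one_dvd _), .inr (one_dvd _)⟩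
  have hv : (divisorGraph n).Adj one v := ⟨by rintro rfl; exact hvu (one_dvd _), .inl (one_dvd _)⟩
  have hle := SimpleGraph.dist_le (hu.toWalk.append hv.toWalk)
  have hlt := SimpleGraph.Reachable.one_lt_dist_of_ne_of_not_adj ⟨hu.toWalk.append hv.toWalk⟩
    hne (by rintro ⟨-, h | h⟩ <;> contradiction)
  simp only [SimpleGraph.Walk.length_append, SimpleGraph.Walk.length_cons,
    SimpleGraph.Walk.length_nil] at hle
  omega

theorem dist_add_ite_dvd_add_ite_dvd (hn : n ≠ 0) (u v : {d : ℕ // d ∈ n.divisors}) :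
    (divisorGraph n).dist u v + (if (u : ℕ) ∣ v then 1 else 0) + (if (v : ℕ) ∣ u then 1 else 0)
      = 2 := by
  by_cases huv : (u : ℕ) ∣ v <;> by_cases hvu : (v : ℕ) ∣ u
  · obtain rfl : u = v := Subtype.ext (Nat.dvd_antisymm huv hvu)
    simp
  · have hadj : (divisorGraph n).Adj u v := ⟨by rintro rfl; exact hvu huv, .inl huv⟩
    simp [SimpleGraph.dist_eq_one_iff_adj.mpr hadj, huv, hvu]
  · have hadj : (divisorGraph n).Adj u v := ⟨by rintro rfl; exact huv hvu, .inr hvu⟩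
    simp [SimpleGraph.dist_eq_one_iff_adj.mpr hadj, huv, hvu]
  · simp [dist_eq_two hn huv hvu, huv, hvu]

theorem sum_ite_dvd (hn : n ≠ 0) :
    ∑ x : {d : ℕ // d ∈ n.divisors} × {d : ℕ // d ∈ n.divisors},
      (if (x.1 : ℕ) ∣ x.2 then 1 else 0) = ∑ d ∈ n.divisors, #d.divisors := by
  rw [Fintype.sum_prod_type_right]
  refine (sum_coe_sort n.divisors fun v =>
    ∑ u : {d : ℕ // d ∈ n.divisors}, if (u : ℕ) ∣ v then 1 else 0).trans ?_
  refine sum_congr rfl fun v hv => ?_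
  rw [sum_coe_sort n.divisors fun u => if u ∣ v then 1 else 0, sum_boole,
    Nat.divisors_filter_dvd_of_dvd hn (Nat.dvd_of_mem_divisors hv), Nat.cast_id]

theorem wienerIndex_add_sum_card_divisors (hn : n ≠ 0) :
    (divisorGraph n).wienerIndex + ∑ d ∈ n.divisors, #d.divisors = #n.divisors ^ 2 := by
  have hswap : ∑ x : {d : ℕ // d ∈ n.divisors} × {d : ℕ // d ∈ n.divisors},
      (if (x.2 : ℕ) ∣ x.1 then 1 else 0) = ∑ d ∈ n.divisors, #d.divisors :=
    (Fintype.sum_equiv (Equiv.prodComm _ _) _ _ fun _ => rfl).trans (sum_ite_dvd hn)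
  have htotal := sum_congr (s₁ := univ) rfl
    fun (x : {d : ℕ // d ∈ n.divisors} × {d : ℕ // d ∈ n.divisors}) _ =>
      dist_add_ite_dvd_add_ite_dvd hn x.1 x.2
  rw [sum_add_distrib, sum_add_distrib, ← SimpleGraph.two_mul_wienerIndex, sum_ite_dvd hn,
    hswap, sum_const, card_univ, Fintype.card_prod, Fintype.card_coe, smul_eq_mul] at htotal
  rw [sq]
  linarith

theorem wienerIndex_prod_primes {s : Finset ℕ} (hs : ∀ p ∈ s, p.Prime) :
    (divisorGraph (∏ p ∈ s, p)).wienerIndex = 4 ^ #s - 3 ^ #s := by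
  have hW := wienerIndex_add_sum_card_divisors (prod_ne_zero_iff.2 fun p hp => (hs p hp).ne_zero)
  rw [Nat.card_divisors_prod_primes hs, Nat.sum_card_divisors_prod_primes hs, ← pow_mul,
    mul_comm, pow_mul] at hW
  exact Nat.eq_sub_of_add_eq hW

end divisorGraph

/-- The Wiener index: the sum of graph distances over all unordered pairs of vertices
(pairs `{u,u}` contribute distance `0`). -/
theorem stmt_7 (k : ℕ) (p : Fin k → ℕ) (hp : ∀ i, (p i).Prime)
    (hinj : Function.Injective p) (n : ℕ) (hn : n = ∏ i, p i) :
    ∑ e ∈ (Finset.univ : Finset {d : ℕ // d ∈ n.divisors}).sym2,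
      Sym2.lift ⟨fun u v => (divisorGraph n).dist u v,
        fun _ _ => SimpleGraph.dist_comm⟩ e = 2 ^ (2 * k) - 3 ^ k := by
  have hs : ∀ q ∈ univ.image p, q.Prime := by simpa using hp
  obtain rfl : n = ∏ q ∈ univ.image p, q := by rw [hn, prod_image hinj.injOn]
  have hk : #(univ.image p) = k := by rw [card_image_of_injective _ hinj, card_fin]
  have hW := divisorGraph.wienerIndex_prod_primes hs
  rw [hk] at hW
  rw [pow_mul]
  exact hW
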